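/- Let Θ be an MLL proof structure such that the extreme-left DR-graph S_∀ℓ(Θ) is a tree and the translation T(Θ) is defined. Then T(Θ) is a deNM-tree; in particular, the graph produced by the translation is a finite tree. -/

import Mathlib

/-! ## MLL formulas, links, proof structures, proof nets, DR-switchings -/

abbrev Occ := ℕ

/-- MLL formulas over the single atom `p`. -/
inductive MLLFormula : Type
  | pos : MLLFormula
  | neg : MLLFormula
  | tensor : MLLFormula → MLLFormula → MLLFormula
  | par : MLLFormula → MLLFormula → MLLFormula
deriving DecidableEq

/-- MLL links, given by their occurrences. -/
inductive MLLLink : Type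
  | id (c1 c2 : Occ) : MLLLink
  | tensor (l r c : Occ) : MLLLink
  | par (l r c : Occ) : MLLLink
deriving DecidableEq

def MLLLink.prems : MLLLink → List Occ
  | .id _ _ => []
  | .tensor l r _ => [l, r]
  | .par l r _ => [l, r]

def MLLLink.concs : MLLLink → List Occ
  | .id c1 c2 => [c1, c2]
  | .tensor _ _ c => [c]
  | .par _ _ c => [c]

def MLLLink.IsPar : MLLLink → Prop
  | .par _ _ _ => True
  | _ => False

/-- An MLL proof structure: a finite set of links over formula occurrences. -/
structure ProofStructure where
  links : Finset MLLLink
  form : Occ → MLLFormula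
  nodupLink : ∀ L ∈ links, (MLLLink.concs L ++ MLLLink.prems L).Nodup
  formOk : ∀ L ∈ links,
    (∀ c1 c2, L = MLLLink.id c1 c2 → form c1 = MLLFormula.pos ∧ form c2 = MLLFormula.neg) ∧
    (∀ l r c, L = MLLLink.tensor l r c → form c = MLLFormula.tensor (form l) (form r)) ∧
    (∀ l r c, L = MLLLink.par l r c → form c = MLLFormula.par (form l) (form r))
  concUnique : ∀ L1 ∈ links, ∀ L2 ∈ links, ∀ x,
    x ∈ MLLLink.concs L1 → x ∈ MLLLink.concs L2 → L1 = L2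
  premUnique : ∀ L1 ∈ links, ∀ L2 ∈ links, ∀ x,
    x ∈ MLLLink.prems L1 → x ∈ MLLLink.prems L2 → L1 = L2
  premIsConc : ∀ L ∈ links, ∀ x ∈ MLLLink.prems L, ∃ K ∈ links, K ≠ L ∧ x ∈ MLLLink.concs K

/-- The set of occurrences of a set of links. -/
def occsOf (S : Finset MLLLink) : Set Occ :=
  {x | ∃ L ∈ S, x ∈ MLLLink.concs L ∨ x ∈ MLLLink.prems L}

/-- `x` is a conclusion of the set of links `S`, i.e. a conclusion of some link of `S`
that is not a premise of any link of `S`. -/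
def IsConcOfSet (S : Finset MLLLink) (x : Occ) : Prop :=
  (∃ L ∈ S, x ∈ MLLLink.concs L) ∧ ∀ L ∈ S, x ∉ MLLLink.prems L

/-- Sequentializability: the inductive construction of MLL proof nets, mirroring
the ID, ⊗ and ⅋ rules of the MLL sequent calculus. -/
inductive Sequentializable (form : Occ → MLLFormula) : Finset MLLLink → Prop
  | id (c1 c2 : Occ) : c1 ≠ c2 → form c1 = MLLFormula.pos → form c2 = MLLFormula.neg →
      Sequentializable form {MLLLink.id c1 c2}
  | tensor (S1 S2 : Finset MLLLink) (l r c : Occ) :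
      Sequentializable form S1 → Sequentializable form S2 →
      (∀ x, x ∈ occsOf S1 → x ∉ occsOf S2) →
      IsConcOfSet S1 l → IsConcOfSet S2 r →
      c ∉ occsOf S1 → c ∉ occsOf S2 →
      form c = MLLFormula.tensor (form l) (form r) →
      Sequentializable form (insert (MLLLink.tensor l r c) (S1 ∪ S2))
  | par (S : Finset MLLLink) (l r c : Occ) :
      Sequentializable form S →
      l ≠ r → IsConcOfSet S l → IsConcOfSet S r →
      c ∉ occsOf S →
      form c = MLLFormula.par (form l) (form r) →
      Sequentializable form (insert (MLLLink.par l r c) S)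

/-- An MLL proof net is a sequentializable MLL proof structure. -/
def ProofStructure.IsProofNet (Θ : ProofStructure) : Prop :=
  Sequentializable Θ.form Θ.links

/-- The edges contributed by a link under a DR-switching `sw`
(`sw L = false` selects the left premise of a ⅋-link, `true` the right one). -/
def drStep (sw : MLLLink → Bool) (L : MLLLink) (x y : Occ) : Prop :=
  match L with
  | .id c1 c2 => x = c1 ∧ y = c2
  | .tensor l r c => (x = l ∧ y = c) ∨ (x = r ∧ y = c)
  | .par l r c => if sw (MLLLink.par l r c) = true then x = r ∧ y = c else x = l ∧ y = c

/-- The DR-graph of a proof structure under a DR-switching. -/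
def DRGraph (Θ : ProofStructure) (sw : MLLLink → Bool) : SimpleGraph Occ where
  Adj x y := x ≠ y ∧ ∃ L ∈ Θ.links, drStep sw L x y ∨ drStep sw L y x
  symm := by
    constructor
    rintro x y ⟨hxy, L, hL, h⟩
    exact ⟨hxy.symm, L, hL, h.symm⟩
  loopless := by constructor; rintro x ⟨hxx, _⟩; exact hxx rfl

def ProofStructure.occSet (Θ : ProofStructure) : Set Occ := occsOf Θ.links

/-- The extreme left DR-switching `S_∀ℓ`. -/
def extremeLeft : MLLLink → Bool := fun _ => false

/-- The extreme left DR-graph `S_∀ℓ(Θ)`. -/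
def DRGraphL (Θ : ProofStructure) : SimpleGraph Occ := DRGraph Θ extremeLeft

/-- `S_∀ℓ(Θ)` is a tree (on the vertex set of occurrences of `Θ`). -/
def DRTreeL (Θ : ProofStructure) : Prop :=
  ((DRGraphL Θ).induce Θ.occSet).IsTree

/-- Consistency of a ⅋-link with premises `l`, `r` and conclusion `c`:
the unique path in the tree `S_∀ℓ(Θ)` from `l` to `r` does not contain `c`. -/
def ParLinkConsistent (Θ : ProofStructure) (l r c : Occ) : Prop :=
  ∀ p : (DRGraphL Θ).Walk l r, p.IsPath → c ∉ p.support

/-- Every ⅋-link of `Θ` is consistent in `S_∀ℓ(Θ)`. -/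
def AllParConsistent (Θ : ProofStructure) : Prop :=
  ∀ l r c, MLLLink.par l r c ∈ Θ.links → ParLinkConsistent Θ l r c

/-- The edge relation of the directed graph `G(S_∀ℓ(Θ))` on ⅋-links:
`(L1, L2)` is an edge when the unique path in `S_∀ℓ(Θ)` between the premises of `L2`
contains the node of `L1`. -/
def deNMRel (Θ : ProofStructure) (L1 L2 : MLLLink) : Prop :=
  L1 ∈ Θ.links ∧ L2 ∈ Θ.links ∧ L1 ≠ L2 ∧
  ∃ l1 r1 c1, L1 = MLLLink.par l1 r1 c1 ∧
  ∃ l2 r2 c2, L2 = MLLLink.par l2 r2 c2 ∧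
  ∃ p : (DRGraphL Θ).Walk l2 r2, p.IsPath ∧ c1 ∈ p.support

/-- Acyclicity of a directed graph given by a relation. -/
def DirAcyclicRel {α : Type} (R : α → α → Prop) : Prop :=
  ∀ x, ¬ Relation.TransGen R x x

/-- `x` is the left premise of the ⅋-link `P` of `Θ`. -/
def leftPremOfPar (Θ : ProofStructure) (x : Occ) (P : MLLLink) : Prop :=
  P ∈ Θ.links ∧ ∃ r c, P = MLLLink.par x r c

/-- `x` is the right premise of the ⅋-link `P` of `Θ`. -/
def rightPremOfPar (Θ : ProofStructure) (x : Occ) (P : MLLLink) : Prop :=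
  P ∈ Θ.links ∧ ∃ l c, P = MLLLink.par l x c

/-- `x` is a premise of some ⅋-link of `Θ`. -/
def premOfParLink (Θ : ProofStructure) (x : Occ) : Prop :=
  ∃ P, leftPremOfPar Θ x P ∨ rightPremOfPar Θ x P

/-- `x` is a conclusion of the proof structure `Θ`. -/
def IsConcOfTheta (Θ : ProofStructure) (x : Occ) : Prop :=
  IsConcOfSet Θ.links x

/-! ## deNM-trees, the translation T(Θ), the rewriting system, and Algorithm A -/

/-- Labels `ℓ_L` and `r_L` for ⅋-links `L`. -/
inductive DLabel : Type
  | left (L : MLLLink) : DLabel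
  | right (L : MLLLink) : DLabel
deriving DecidableEq

/-- A node of a deNM-tree is either a labeled node carrying a finite label set,
or a ⅋-node labeled by a ⅋-link. -/
inductive DNodeKind : Type
  | labeled (s : Finset DLabel) : DNodeKind
  | par (L : MLLLink) : DNodeKind

/-- The raw data of a deNM-tree: a finite vertex set, a node-kind assignment,
a finite edge set, and for each ⅋-node the neighbour attached at its upper port. -/
structure PreTree where
  V : Finset ℕ
  kind : ℕ → DNodeKind
  edges : Finset (Sym2 ℕ)
  upper : ℕ → Option ℕ

/-- The underlying undirected graph of a deNM-tree. -/
def PreTree.graph (T : PreTree) : SimpleGraph ℕ where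
  Adj x y := x ≠ y ∧ s(x, y) ∈ T.edges
  symm := by
    constructor
    rintro x y ⟨hxy, he⟩
    exact ⟨hxy.symm, by rwa [Sym2.eq_swap]⟩
  loopless := by constructor; rintro x ⟨hxx, _⟩; exact hxx rfl

/-- The degree of a vertex. -/
def PreTree.degree (T : PreTree) (v : ℕ) : ℕ :=
  (T.edges.filter (fun e => v ∈ e)).card

/-- `n` is a labeled node of `T`. -/
def PreTree.IsLabeledVertex (T : PreTree) (n : ℕ) : Prop :=
  n ∈ T.V ∧ ∃ s, T.kind n = DNodeKind.labeled s

/-- `T` is a deNM-tree: a finite tree whose ⅋-nodes have degree 1 or 2 and have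
their upper port attached to a neighbour. -/
def PreTree.IsDeNMTree (T : PreTree) : Prop :=
  (∀ e ∈ T.edges, ∀ x ∈ e, x ∈ T.V) ∧
  (∀ e ∈ T.edges, ¬ e.IsDiag) ∧
  (T.graph.induce (↑T.V : Set ℕ)).IsTree ∧
  ∀ v ∈ T.V, ∀ L, T.kind v = DNodeKind.par L →
    (∃ u ∈ T.V, T.upper v = some u ∧ s(v, u) ∈ T.edges) ∧
    1 ≤ T.degree v ∧ T.degree v ≤ 2

/-- ⅋-consistency of a deNM-tree: for every ⅋-node `v` (for the ⅋-link `L`),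
the unique path between its upper-port neighbour (the left premise position)
and any labeled node carrying `r_L` (the right premise position) avoids `v`. -/
def PreTree.ParConsistentD (T : PreTree) : Prop :=
  ∀ v ∈ T.V, ∀ L, T.kind v = DNodeKind.par L →
    ∀ u, T.upper v = some u →
      ∀ w ∈ T.V, ∀ s, T.kind w = DNodeKind.labeled s → DLabel.right L ∈ s →
        ∀ p : T.graph.Walk u w, p.IsPath → v ∉ p.support

/-- The induced directed relation on ⅋-nodes of a deNM-tree:
`(v1, v2)` when the path between the two premise positions of `v2`'s ⅋-link
passes through `v1`. -/
def PreTree.dirRel (T : PreTree) (v1 v2 : ℕ) : Prop :=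
  v1 ∈ T.V ∧ v2 ∈ T.V ∧ v1 ≠ v2 ∧
  (∃ L1, T.kind v1 = DNodeKind.par L1) ∧
  ∃ L2, T.kind v2 = DNodeKind.par L2 ∧
    ∃ u, T.upper v2 = some u ∧
      ∃ w ∈ T.V, ∃ s, T.kind w = DNodeKind.labeled s ∧ DLabel.right L2 ∈ s ∧
        ∃ p : T.graph.Walk u w, p.IsPath ∧ v1 ∈ p.support

/-- Directed acyclicity of a deNM-tree. -/
def PreTree.DirAcyclicD (T : PreTree) : Prop :=
  ∀ v, ¬ Relation.TransGen T.dirRel v v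

/-! ### The translation `T(Θ)` -/

/-- A ⅋-link of `Θ` gets an auxiliary labeled node exactly when its conclusion is a
premise of another ⅋-link. -/
def hasAux (Θ : ProofStructure) (L : MLLLink) : Prop :=
  L ∈ Θ.links ∧ ∃ l r c, L = MLLLink.par l r c ∧ premOfParLink Θ c

/-- The label contributed by an occurrence `x`: `ℓ_P` if `x` is the left premise of a
⅋-link `P`, `r_P` if `x` is the right premise of `P`. -/
def labelOfOcc (Θ : ProofStructure) (x : Occ) (d : DLabel) : Prop :=
  (∃ P, leftPremOfPar Θ x P ∧ d = DLabel.left P) ∨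
  (∃ P, rightPremOfPar Θ x P ∧ d = DLabel.right P)

/-- The labels carried by the (auxiliary) labeled node of a link `K`:
those contributed by the conclusions of `K`. -/
def linkLabel (Θ : ProofStructure) (K : MLLLink) (d : DLabel) : Prop :=
  ∃ x ∈ MLLLink.concs K, labelOfOcc Θ x d

/-- The node through which the subtree translating `K` connects upwards. -/
def OutIs (Θ : ProofStructure) (main aux : MLLLink → ℕ) (K : MLLLink) (v : ℕ) : Prop :=
  (hasAux Θ K ∧ v = aux K) ∨ (¬ hasAux Θ K ∧ v = main K)

/-- The edges of the translation. -/
def EdgeSpec (Θ : ProofStructure) (main aux : MLLLink → ℕ) (u v : ℕ) : Prop :=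
  (∃ x K M, K ∈ Θ.links ∧ M ∈ Θ.links ∧ x ∈ MLLLink.concs K ∧ x ∈ MLLLink.prems M ∧
      ¬ MLLLink.IsPar M ∧ OutIs Θ main aux K u ∧ v = main M) ∨
  (∃ K l r c, K ∈ Θ.links ∧ MLLLink.par l r c ∈ Θ.links ∧ l ∈ MLLLink.concs K ∧
      OutIs Θ main aux K u ∧ v = main (MLLLink.par l r c)) ∨
  (∃ L, hasAux Θ L ∧ u = main L ∧ v = aux L)

/-- The translation `T(Θ)` is defined: `S_∀ℓ(Θ)` is a tree, no ID-link has both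
conclusions premises of ⅋-links, and no ID-link has one conclusion a conclusion of `Θ`
while the other is a premise of a ⅋-link. -/
def TransDefined (Θ : ProofStructure) : Prop :=
  DRTreeL Θ ∧
  ∀ c1 c2, MLLLink.id c1 c2 ∈ Θ.links →
    ¬(premOfParLink Θ c1 ∧ premOfParLink Θ c2) ∧
    ¬(IsConcOfTheta Θ c1 ∧ premOfParLink Θ c2) ∧
    ¬(IsConcOfTheta Θ c2 ∧ premOfParLink Θ c1)

/-- `T` is (a copy of) the deNM-tree `T(Θ)` translating `Θ`. -/
def IsTranslation (Θ : ProofStructure) (T : PreTree) : Prop :=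
  TransDefined Θ ∧
  ∃ main aux : MLLLink → ℕ,
    (∀ L1 ∈ Θ.links, ∀ L2 ∈ Θ.links, main L1 = main L2 → L1 = L2) ∧
    (∀ L1 L2, hasAux Θ L1 → hasAux Θ L2 → aux L1 = aux L2 → L1 = L2) ∧
    (∀ L1 ∈ Θ.links, ∀ L2, hasAux Θ L2 → main L1 ≠ aux L2) ∧
    (∀ v, v ∈ T.V ↔ ((∃ L ∈ Θ.links, v = main L) ∨ (∃ L, hasAux Θ L ∧ v = aux L))) ∧
    (∀ L ∈ Θ.links, ¬ MLLLink.IsPar L →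
        ∃ s, T.kind (main L) = DNodeKind.labeled s ∧ ∀ d, d ∈ s ↔ linkLabel Θ L d) ∧
    (∀ L ∈ Θ.links, MLLLink.IsPar L → T.kind (main L) = DNodeKind.par L) ∧
    (∀ L, hasAux Θ L →
        ∃ s, T.kind (aux L) = DNodeKind.labeled s ∧ ∀ d, d ∈ s ↔ linkLabel Θ L d) ∧
    (∀ l r c, MLLLink.par l r c ∈ Θ.links →
        ∀ K ∈ Θ.links, l ∈ MLLLink.concs K →
          ∀ u, OutIs Θ main aux K u → T.upper (main (MLLLink.par l r c)) = some u) ∧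
    (∀ e, e ∈ T.edges ↔
        ∃ u v, e = s(u, v) ∧ (EdgeSpec Θ main aux u v ∨ EdgeSpec Θ main aux v u))

/-! ### The rewriting system and Algorithm A -/

def replaceN (v a : ℕ) : ℕ → ℕ := fun x => if x = v then a else x

/-- Eliminate the node `v`, letting `a` absorb the remaining connections of `v`
(used by the ⅋-elimination rule). -/
def PreTree.elimAt (T : PreTree) (v a : ℕ) : PreTree where
  V := T.V.erase v
  kind := T.kind
  edges := (T.edges.image (Sym2.map (replaceN v a))).filter (fun e => ¬ e.IsDiag)
  upper := T.upper

def mergeKind (k k' : DNodeKind) : DNodeKind :=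
  match k, k' with
  | DNodeKind.labeled s, DNodeKind.labeled s' => DNodeKind.labeled (s ∪ s')
  | k, _ => k

/-- Merge the labeled node `n'` into the labeled node `a`, taking the union of the
label sets (used by the union rule). -/
def PreTree.contract (T : PreTree) (a n' : ℕ) : PreTree where
  V := T.V.erase n'
  kind := fun x => if x = a then mergeKind (T.kind a) (T.kind n') else T.kind x
  edges := (T.edges.image (Sym2.map (replaceN n' a))).filter (fun e => ¬ e.IsDiag)
  upper := fun x => (T.upper x).map (replaceN n' a)

/-- The three rewrite rules. -/
inductive RRule : Type
  | elim | union | jump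

/-- A configuration of Algorithm A: the current deNM-tree, the active (labeled)
node, and the set of ⅋-links to which the local jump rule has been applied. -/
structure Config where
  tree : PreTree
  active : ℕ
  jumped : Finset MLLLink

/-- One application of a rewrite rule at the active node. -/
inductive Step : RRule → Config → Config → Prop
  | elim (c : Config) (v : ℕ) (L : MLLLink) (s : Finset DLabel) :
      c.active ∈ c.tree.V → v ∈ c.tree.V →
      c.tree.kind c.active = DNodeKind.labeled s →
      c.tree.kind v = DNodeKind.par L →
      c.tree.upper v = some c.active →
      s(c.active, v) ∈ c.tree.edges →
      DLabel.left L ∈ s → DLabel.right L ∈ s →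
      Step RRule.elim c
        { tree := c.tree.elimAt v c.active, active := c.active, jumped := c.jumped }
  | union (c : Config) (n' : ℕ) (s s' : Finset DLabel) :
      c.active ∈ c.tree.V → n' ∈ c.tree.V → n' ≠ c.active →
      c.tree.kind c.active = DNodeKind.labeled s →
      c.tree.kind n' = DNodeKind.labeled s' →
      s(c.active, n') ∈ c.tree.edges →
      Step RRule.union c
        { tree := c.tree.contract c.active n', active := c.active, jumped := c.jumped }
  | jump (c : Config) (v m : ℕ) (L : MLLLink) (s s' : Finset DLabel) :
      c.active ∈ c.tree.V → v ∈ c.tree.V → m ∈ c.tree.V →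
      c.tree.kind c.active = DNodeKind.labeled s →
      c.tree.kind v = DNodeKind.par L →
      s(c.active, v) ∈ c.tree.edges →
      c.tree.upper v ≠ some c.active →
      c.tree.kind m = DNodeKind.labeled s' →
      DLabel.right L ∈ s' →
      L ∉ c.jumped →
      Step RRule.jump c { tree := c.tree, active := m, jumped := insert L c.jumped }

def StepAny (c c' : Config) : Prop := ∃ r, Step r c c'

/-- No rewrite rule applies. -/
def Stuck (c : Config) : Prop := ∀ r c', ¬ Step r c c'

/-- `s` is the full label set `S_full` of `Θ`. -/
def SfullSpec (Θ : ProofStructure) (s : Finset DLabel) : Prop :=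
  ∀ d, d ∈ s ↔ ∃ l r c, MLLLink.par l r c ∈ Θ.links ∧
    (d = DLabel.left (MLLLink.par l r c) ∨ d = DLabel.right (MLLLink.par l r c))

/-- The terminal tree is a single degree-0 node labeled by `S_full`. -/
def FinalYes (Θ : ProofStructure) (c : Config) : Prop :=
  c.tree.V = {c.active} ∧ c.tree.edges = ∅ ∧
  ∃ s, c.tree.kind c.active = DNodeKind.labeled s ∧ SfullSpec Θ s

/-- Algorithm A with input `Θ` outputs yes. -/
def AlgAYes (Θ : ProofStructure) : Prop :=
  TransDefined Θ ∧
  ∀ T, IsTranslation Θ T → ∀ n, T.IsLabeledVertex n →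
    ∀ c', Relation.ReflTransGen StepAny { tree := T, active := n, jumped := ∅ } c' →
      Stuck c' → FinalYes Θ c'

/-- The local jump rule is applicable (up to the double-application check) at the
active node of `c`, targeting the ⅋-link `L`. -/
def JumpReady (c : Config) (L : MLLLink) : Prop :=
  c.active ∈ c.tree.V ∧ (∃ s, c.tree.kind c.active = DNodeKind.labeled s) ∧
  ∃ v ∈ c.tree.V, c.tree.kind v = DNodeKind.par L ∧
    s(c.active, v) ∈ c.tree.edges ∧ c.tree.upper v ≠ some c.active

/-!
`T(Θ)` has one node per link plus an auxiliary node per ⅋-link whose conclusion is a premise of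
another ⅋-link; its edges follow the premises kept by the extreme left switching, plus one edge
from each such ⅋-node to its auxiliary node. Each edge of `S_∀ℓ(Θ)` is thereby realised by a
path of `T(Θ)`, so `T(Θ)` is connected because `S_∀ℓ(Θ)` is. Counting the edges of the tree
`S_∀ℓ(Θ)` link by link shows that fewer premises are kept than there are links, so `T(Θ)` has
fewer edges than nodes, and a connected graph with that few edges is a tree. Finally, a ⅋-node
is adjacent only to the node feeding its left premise (its upper port) and to the unique node
below its conclusion.
-/

open SimpleGraph

namespace SimpleGraph

variable {α : Type*} {G : SimpleGraph α} {s : Set α}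

lemma isTree_of_connected_of_natCard_edgeSet_lt [Finite α] (h : G.Connected)
    (hcard : Nat.card G.edgeSet < Nat.card α) : G.IsTree :=
  isTree_iff_connected_and_card.mpr ⟨h, by have := h.card_vert_le_card_edgeSet_add_one; omega⟩

lemma natCard_edgeSet_induce_le {E : Finset (Sym2 α)} (hE : G.edgeSet ⊆ E) :
    Nat.card (G.induce s).edgeSet ≤ E.card := by
  rw [Nat.card_coe_set_eq, ← Set.ncard_image_of_injective _ (Sym2.map.injective
    Subtype.val_injective), ← Set.ncard_coe_finset]
  refine Set.ncard_le_ncard (fun e he => hE ?_) E.finite_toSet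
  obtain ⟨e, he, rfl⟩ := he
  induction e using Sym2.ind
  exact he

lemma card_le_natCard_edgeSet_induce [Finite s] {D : Finset (Sym2 α)}
    (hD : ∀ e ∈ D, e ∈ G.edgeSet ∧ ∀ x ∈ e, x ∈ s) :
    D.card ≤ Nat.card (G.induce s).edgeSet := by
  rw [Nat.card_coe_set_eq, ← Set.ncard_coe_finset]
  refine (Set.ncard_le_ncard (t := Sym2.map Subtype.val '' (G.induce s).edgeSet)
    (fun e he => ?_)).trans Set.ncard_image_le
  obtain ⟨hadj, hmem⟩ := hD e he
  induction e using Sym2.ind with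
  | h x y =>
    exact ⟨s(⟨x, hmem x (Sym2.mem_mk_left x y)⟩, ⟨y, hmem y (Sym2.mem_mk_right x y)⟩),
      hadj, rfl⟩

lemma Reachable.induce_of_forall_adj_mem (hs : ∀ u v, G.Adj u v → u ∈ s) {u v : α}
    (h : G.Reachable u v) (hu : u ∈ s) (hv : v ∈ s) :
    (G.induce s).Reachable ⟨u, hu⟩ ⟨v, hv⟩ := by
  obtain ⟨p⟩ := h
  induction p with
  | nil => rfl
  | cons hadj _ ih =>
    have hw := hs _ _ hadj.symm
    have hadj' : (G.induce s).Adj ⟨_, hu⟩ ⟨_, hw⟩ := induce_adj.mpr hadj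
    exact hadj'.reachable.trans (ih hw hv)

end SimpleGraph

def MLLFormula.size : MLLFormula → ℕ
  | .pos => 0
  | .neg => 0
  | .tensor a b => a.size + b.size + 1
  | .par a b => a.size + b.size + 1

namespace MLLLink

/-- The premises that the extreme left switching keeps attached to the link, and the edges the
link contributes to `S_∀ℓ(Θ)`. -/
def switchedPrems : MLLLink → List Occ
  | .id _ _ => []
  | .tensor l r _ => [l, r]
  | .par l _ _ => [l]

def switchedEdges : MLLLink → Finset (Sym2 Occ)
  | .id c1 c2 => {s(c1, c2)}
  | .tensor l r c => {s(l, c), s(r, c)}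
  | .par l _ c => {s(l, c)}

lemma switchedPrems_subset_prems (L : MLLLink) : L.switchedPrems ⊆ L.prems := by
  cases L <;> simp [switchedPrems, prems]

lemma exists_of_mem_switchedEdges {L : MLLLink} {e : Sym2 Occ} (he : e ∈ L.switchedEdges) :
    ∃ a b, e = s(a, b) ∧ b ∈ L.concs ∧ (a ∈ L.concs ∨ a ∈ L.switchedPrems) := by
  cases L with
  | id c1 c2 => exact ⟨c1, c2, by simpa [switchedEdges] using he, by simp [concs]⟩
  | tensor l r c =>
    simp only [switchedEdges, Finset.mem_insert, Finset.mem_singleton] at he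
    rcases he with rfl | rfl
    · exact ⟨l, c, rfl, by simp [concs, switchedPrems]⟩
    · exact ⟨r, c, rfl, by simp [concs, switchedPrems]⟩
  | par l r c => exact ⟨l, c, by simpa [switchedEdges] using he, by simp [concs, switchedPrems]⟩

lemma mem_of_drStep_extremeLeft {L : MLLLink} {a b : Occ}
    (h : drStep extremeLeft L a b) :
    b ∈ L.concs ∧ (a ∈ L.concs ∨ a ∈ L.switchedPrems) := by
  cases L with
  | id c1 c2 => obtain ⟨rfl, rfl⟩ := h; simp [concs]
  | tensor l r c => rcases h with ⟨rfl, rfl⟩ | ⟨rfl, rfl⟩ <;> simp [concs, switchedPrems]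
  | par l r c =>
    obtain ⟨rfl, rfl⟩ : a = l ∧ b = c := by simpa [drStep, extremeLeft] using h
    simp [concs, switchedPrems]

lemma exists_mem_concs (L : MLLLink) : ∃ x, x ∈ L.concs := by
  cases L <;> simp [concs]

end MLLLink

namespace ProofStructure

variable (Θ : ProofStructure) {K L M : MLLLink}

lemma size_form_prem_lt (hL : L ∈ Θ.links) {x c : Occ} (hx : x ∈ L.prems)
    (hc : c ∈ L.concs) : (Θ.form x).size < (Θ.form c).size := by
  obtain ⟨-, htensor, hpar⟩ := Θ.formOk L hL
  cases L with
  | id => simp [MLLLink.prems] at hx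
  | tensor l r c' =>
    simp only [MLLLink.prems, MLLLink.concs, List.mem_cons, List.not_mem_nil,
      or_false] at hx hc
    rw [hc, htensor l r c' rfl]
    rcases hx with rfl | rfl <;> simp only [MLLFormula.size] <;> omega
  | par l r c' =>
    simp only [MLLLink.prems, MLLLink.concs, List.mem_cons, List.not_mem_nil,
      or_false] at hx hc
    rw [hc, hpar l r c' rfl]
    rcases hx with rfl | rfl <;> simp only [MLLFormula.size] <;> omega

lemma ne_of_mem_concs_of_mem_prems (hK : K ∈ Θ.links) {x : Occ} (hc : x ∈ K.concs)
    (hp : x ∈ M.prems) : K ≠ M := by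
  rintro rfl
  exact List.disjoint_of_nodup_append (Θ.nodupLink K hK) hc hp

lemma not_mutual_prems (hK : K ∈ Θ.links) (hM : M ∈ Θ.links) {a b : Occ}
    (hac : a ∈ K.concs) (hap : a ∈ M.prems) (hbc : b ∈ M.concs) (hbp : b ∈ K.prems) :
    False := by
  have := Θ.size_form_prem_lt hM hap hbc
  have := Θ.size_form_prem_lt hK hbp hac
  omega

lemma exists_mem_concs {x : Occ} (hx : x ∈ Θ.occSet) : ∃ L ∈ Θ.links, x ∈ L.concs := by
  obtain ⟨L, hL, hx | hx⟩ := hx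
  · exact ⟨L, hL, hx⟩
  · obtain ⟨K, hK, -, hxK⟩ := Θ.premIsConc L hL x hx
    exact ⟨K, hK, hxK⟩

lemma occSet_eq_biUnion : Θ.occSet = ↑(Θ.links.biUnion fun L => L.concs.toFinset) := by
  ext x
  simp only [Finset.coe_biUnion, Finset.mem_coe, List.coe_toFinset, Set.mem_iUnion,
    Set.mem_ofPred_eq, exists_prop]
  exact ⟨Θ.exists_mem_concs, fun ⟨L, hL, hx⟩ => ⟨L, hL, Or.inl hx⟩⟩

lemma natCard_occSet_le : Nat.card Θ.occSet ≤ ∑ L ∈ Θ.links, L.concs.length := by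
  rw [occSet_eq_biUnion, Nat.card_coe_set_eq, Set.ncard_coe_finset]
  exact Finset.card_biUnion_le.trans
    (Finset.sum_le_sum fun L _ => L.concs.toFinset_card_le)

lemma switchedEdges_subset_drEdges (hL : L ∈ Θ.links) {e : Sym2 Occ}
    (he : e ∈ L.switchedEdges) :
    e ∈ (DRGraphL Θ).edgeSet ∧ ∀ x ∈ e, x ∈ Θ.occSet := by
  have hnd := Θ.nodupLink L hL
  have hocc : ∀ x ∈ L.concs ++ L.prems, x ∈ Θ.occSet := fun x hx =>
    ⟨L, hL, List.mem_append.mp hx⟩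
  cases L with
  | id c1 c2 =>
    simp only [MLLLink.switchedEdges, Finset.mem_singleton] at he
    subst he
    simp only [MLLLink.concs, MLLLink.prems, List.append_nil, List.nodup_cons,
      List.mem_singleton] at hnd hocc
    refine ⟨⟨hnd.1, _, hL, Or.inl ⟨rfl, rfl⟩⟩, ?_⟩
    simpa [Sym2.mem_iff] using hocc
  | tensor l r c =>
    simp only [MLLLink.switchedEdges, Finset.mem_insert, Finset.mem_singleton] at he
    simp only [MLLLink.concs, MLLLink.prems, List.singleton_append, List.nodup_cons,
      List.mem_cons] at hnd hocc
    rcases he with rfl | rfl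
    · exact ⟨⟨by grind, _, hL, Or.inl (Or.inl ⟨rfl, rfl⟩)⟩,
        by simp only [Sym2.mem_iff]; grind⟩
    · exact ⟨⟨by grind, _, hL, Or.inl (Or.inr ⟨rfl, rfl⟩)⟩,
        by simp only [Sym2.mem_iff]; grind⟩
  | par l r c =>
    simp only [MLLLink.switchedEdges, Finset.mem_singleton] at he
    subst he
    simp only [MLLLink.concs, MLLLink.prems, List.singleton_append, List.nodup_cons,
      List.mem_cons] at hnd hocc
    exact ⟨⟨by grind, _, hL, Or.inl (by simp [drStep, extremeLeft])⟩,
      by simp only [Sym2.mem_iff]; grind⟩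

lemma disjoint_switchedEdges (hK : K ∈ Θ.links) (hM : M ∈ Θ.links) (hKM : K ≠ M) :
    Disjoint K.switchedEdges M.switchedEdges := by
  rw [Finset.disjoint_left]
  intro e heK heM
  obtain ⟨a, b, rfl, hbK, haK⟩ := MLLLink.exists_of_mem_switchedEdges heK
  obtain ⟨a', b', heq, hbM, haM⟩ := MLLLink.exists_of_mem_switchedEdges heM
  have uniq := Θ.concUnique K hK M hM
  rcases Sym2.eq_iff.mp heq with ⟨rfl, rfl⟩ | ⟨rfl, rfl⟩
  · exact hKM (uniq b hbK hbM)
  · rcases haM with haM | haM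
    · exact hKM (uniq b hbK haM)
    rcases haK with haK | haK
    · exact hKM (uniq a haK hbM)
    exact Θ.not_mutual_prems hK hM hbK (M.switchedPrems_subset_prems haM) hbM
      (K.switchedPrems_subset_prems haK)

lemma length_switchedPrems_add_length_concs (hL : L ∈ Θ.links) :
    L.switchedPrems.length + L.concs.length = L.switchedEdges.card + 1 := by
  cases L with
  | id c1 c2 => simp [MLLLink.switchedPrems, MLLLink.concs, MLLLink.switchedEdges]
  | tensor l r c =>
    have hnd := Θ.nodupLink _ hL
    simp only [MLLLink.concs, MLLLink.prems, List.singleton_append, List.nodup_cons,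
      List.mem_cons] at hnd
    have hne : s(l, c) ≠ s(r, c) := by
      rw [Ne, Sym2.eq_iff]; grind
    simp [MLLLink.switchedPrems, MLLLink.concs, MLLLink.switchedEdges, hne]
  | par l r c => simp [MLLLink.switchedPrems, MLLLink.concs, MLLLink.switchedEdges]

lemma sum_length_switchedPrems_lt (hdr : DRTreeL Θ) :
    ∑ L ∈ Θ.links, L.switchedPrems.length < Θ.links.card := by
  have : Finite Θ.occSet := by rw [occSet_eq_biUnion]; infer_instance
  have hcard := (isTree_iff_connected_and_card.mp hdr).2
  have hedges : ∑ L ∈ Θ.links, L.switchedEdges.card ≤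
      Nat.card ((DRGraphL Θ).induce Θ.occSet).edgeSet := by
    rw [← Finset.card_biUnion fun K hK M hM => Θ.disjoint_switchedEdges hK hM]
    refine card_le_natCard_edgeSet_induce fun e he => ?_
    obtain ⟨L, hL, heL⟩ := Finset.mem_biUnion.mp he
    exact Θ.switchedEdges_subset_drEdges hL heL
  have hsum : ∑ L ∈ Θ.links, (L.switchedPrems.length + L.concs.length) =
      ∑ L ∈ Θ.links, (L.switchedEdges.card + 1) :=
    Finset.sum_congr rfl fun L hL => Θ.length_switchedPrems_add_length_concs hL
  rw [Finset.sum_add_distrib, Finset.sum_add_distrib, Finset.sum_const, smul_eq_mul,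
    mul_one] at hsum
  have := Θ.natCard_occSet_le
  omega

end ProofStructure

lemma PreTree.graph_edgeSet_subset (T : PreTree) : T.graph.edgeSet ⊆ T.edges := by
  intro e he
  induction e using Sym2.ind
  exact he.2

/-- The data witnessing `IsTranslation Θ T`: `main L` is the node of the link `L` and
`aux L` the auxiliary labeled node of a ⅋-link `L` with `hasAux Θ L`. -/
structure TranslationData (Θ : ProofStructure) (T : PreTree) where
  main : MLLLink → ℕ
  aux : MLLLink → ℕ
  main_injOn : ∀ L1 ∈ Θ.links, ∀ L2 ∈ Θ.links, main L1 = main L2 → L1 = L2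
  aux_injOn : ∀ L1 L2, hasAux Θ L1 → hasAux Θ L2 → aux L1 = aux L2 → L1 = L2
  main_ne_aux : ∀ L1 ∈ Θ.links, ∀ L2, hasAux Θ L2 → main L1 ≠ aux L2
  mem_V_iff : ∀ v, v ∈ T.V ↔
      ((∃ L ∈ Θ.links, v = main L) ∨ (∃ L, hasAux Θ L ∧ v = aux L))
  kind_main : ∀ L ∈ Θ.links, ¬ MLLLink.IsPar L →
      ∃ s, T.kind (main L) = DNodeKind.labeled s ∧ ∀ d, d ∈ s ↔ linkLabel Θ L d
  kind_main_par : ∀ L ∈ Θ.links, MLLLink.IsPar L → T.kind (main L) = DNodeKind.par L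
  kind_aux : ∀ L, hasAux Θ L →
      ∃ s, T.kind (aux L) = DNodeKind.labeled s ∧ ∀ d, d ∈ s ↔ linkLabel Θ L d
  upper_main_par : ∀ l r c, MLLLink.par l r c ∈ Θ.links →
      ∀ K ∈ Θ.links, l ∈ MLLLink.concs K →
        ∀ u, OutIs Θ main aux K u → T.upper (main (MLLLink.par l r c)) = some u
  mem_edges_iff : ∀ e, e ∈ T.edges ↔
      ∃ u v, e = s(u, v) ∧ (EdgeSpec Θ main aux u v ∨ EdgeSpec Θ main aux v u)

lemma IsTranslation.nonempty_translationData {Θ : ProofStructure} {T : PreTree}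
    (hT : IsTranslation Θ T) : Nonempty (TranslationData Θ T) := by
  obtain ⟨-, main, aux, h1, h2, h3, h4, h5, h6, h7, h8, h9⟩ := hT
  exact ⟨⟨main, aux, h1, h2, h3, h4, h5, h6, h7, h8, h9⟩⟩

noncomputable def auxLinks (Θ : ProofStructure) : Finset MLLLink :=
  open scoped Classical in Θ.links.filter (hasAux Θ)

lemma mem_auxLinks {Θ : ProofStructure} {L : MLLLink} : L ∈ auxLinks Θ ↔ hasAux Θ L := by
  classical
  simp only [auxLinks, Finset.mem_filter, and_iff_right_iff_imp]
  exact fun h => h.1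

namespace TranslationData

variable {Θ : ProofStructure} {T : PreTree} (td : TranslationData Θ T) {K L M : MLLLink}

noncomputable def out (K : MLLLink) : ℕ :=
  open scoped Classical in if hasAux Θ K then td.aux K else td.main K

lemma out_of_hasAux (h : hasAux Θ K) : td.out K = td.aux K := by
  simp [out, h]

lemma out_of_not_hasAux (h : ¬ hasAux Θ K) : td.out K = td.main K := by
  simp [out, h]

lemma outIs_out (K : MLLLink) : OutIs Θ td.main td.aux K (td.out K) := by
  by_cases h : hasAux Θ K
  · exact Or.inl ⟨h, td.out_of_hasAux h⟩
  · exact Or.inr ⟨h, td.out_of_not_hasAux h⟩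

lemma eq_out_of_outIs {u : ℕ} (h : OutIs Θ td.main td.aux K u) : u = td.out K := by
  rcases h with ⟨h, rfl⟩ | ⟨h, rfl⟩
  · exact (td.out_of_hasAux h).symm
  · exact (td.out_of_not_hasAux h).symm

lemma main_mem (hK : K ∈ Θ.links) : td.main K ∈ T.V :=
  (td.mem_V_iff _).mpr (Or.inl ⟨K, hK, rfl⟩)

lemma aux_mem (hK : hasAux Θ K) : td.aux K ∈ T.V :=
  (td.mem_V_iff _).mpr (Or.inr ⟨K, hK, rfl⟩)

lemma out_mem (hK : K ∈ Θ.links) : td.out K ∈ T.V := by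
  by_cases h : hasAux Θ K
  · exact td.out_of_hasAux h ▸ td.aux_mem h
  · exact td.out_of_not_hasAux h ▸ td.main_mem hK

lemma out_ne_main (hK : K ∈ Θ.links) (hM : M ∈ Θ.links) (hKM : K ≠ M) :
    td.out K ≠ td.main M := by
  by_cases h : hasAux Θ K
  · exact td.out_of_hasAux h ▸ (td.main_ne_aux M hM K h).symm
  · exact td.out_of_not_hasAux h ▸ fun he => hKM (td.main_injOn K hK M hM he)

lemma main_eq_out (hK : K ∈ Θ.links) (hM : M ∈ Θ.links) (h : td.main M = td.out K) :
    M = K ∧ ¬ hasAux Θ K := by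
  by_cases hA : hasAux Θ K
  · exact absurd (td.out_of_hasAux hA ▸ h) (td.main_ne_aux M hM K hA)
  · exact ⟨td.main_injOn M hM K hK (td.out_of_not_hasAux hA ▸ h), hA⟩

lemma mem_edges_of_mem_switchedPrems (hK : K ∈ Θ.links) (hM : M ∈ Θ.links) {x : Occ}
    (hxK : x ∈ K.concs) (hxM : x ∈ M.switchedPrems) : s(td.out K, td.main M) ∈ T.edges := by
  refine (td.mem_edges_iff _).mpr ⟨_, _, rfl, Or.inl ?_⟩
  cases M with
  | id => simp [MLLLink.switchedPrems] at hxM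
  | tensor l r c =>
    exact Or.inl ⟨x, K, _, hK, hM, hxK,
      MLLLink.switchedPrems_subset_prems _ hxM, by simp [MLLLink.IsPar], td.outIs_out K, rfl⟩
  | par l r c =>
    obtain rfl : x = l := by simpa [MLLLink.switchedPrems] using hxM
    exact Or.inr (Or.inl ⟨K, x, r, c, hK, hM, hxK, td.outIs_out K, rfl⟩)

lemma main_aux_mem_edges (hL : hasAux Θ L) : s(td.main L, td.aux L) ∈ T.edges :=
  (td.mem_edges_iff _).mpr ⟨_, _, rfl, Or.inl (Or.inr (Or.inr ⟨L, hL, rfl, rfl⟩))⟩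

lemma eq_main_of_kind_eq_par {v : ℕ} (hv : v ∈ T.V) (hk : T.kind v = DNodeKind.par L) :
    L ∈ Θ.links ∧ v = td.main L ∧ ∃ l r c, L = MLLLink.par l r c := by
  rcases (td.mem_V_iff v).mp hv with ⟨L', hL', rfl⟩ | ⟨L', hL', rfl⟩
  · by_cases hp : L'.IsPar
    · obtain rfl : L = L' := by simpa [hk] using td.kind_main_par L' hL' hp
      cases L <;> simp_all [MLLLink.IsPar]
    · obtain ⟨s, hs, -⟩ := td.kind_main L' hL' hp
      simp [hk] at hs
  · obtain ⟨s, hs, -⟩ := td.kind_aux L' hL'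
    simp [hk] at hs

lemma edgeSpec_cases {u v : ℕ} (h : EdgeSpec Θ td.main td.aux u v) :
    (∃ K ∈ Θ.links, ∃ M ∈ Θ.links, ∃ x ∈ K.concs, x ∈ M.switchedPrems ∧
      u = td.out K ∧ v = td.main M) ∨
    (∃ L, hasAux Θ L ∧ u = td.main L ∧ v = td.aux L) := by
  rcases h with ⟨x, K, M, hK, hM, hxK, hxM, hnp, hout, rfl⟩ |
    ⟨K, l, r, c, hK, hP, hlK, hout, rfl⟩ | hL
  · refine Or.inl ⟨K, hK, M, hM, x, hxK, ?_, td.eq_out_of_outIs hout, rfl⟩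
    cases M <;> simp_all [MLLLink.prems, MLLLink.switchedPrems, MLLLink.IsPar]
  · exact Or.inl ⟨K, hK, _, hP, l, hlK, by simp [MLLLink.switchedPrems],
      td.eq_out_of_outIs hout, rfl⟩
  · exact Or.inr hL

lemma edgeSpec_endpoints {u v : ℕ} (h : EdgeSpec Θ td.main td.aux u v) :
    u ∈ T.V ∧ v ∈ T.V ∧ u ≠ v := by
  rcases td.edgeSpec_cases h with ⟨K, hK, M, hM, x, hxK, hxM, rfl, rfl⟩ | ⟨L, hL, rfl, rfl⟩
  · exact ⟨td.out_mem hK, td.main_mem hM, td.out_ne_main hK hM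
      (Θ.ne_of_mem_concs_of_mem_prems hK hxK (M.switchedPrems_subset_prems hxM))⟩
  · exact ⟨td.main_mem hL.1, td.aux_mem hL, td.main_ne_aux L hL.1 L hL⟩

lemma exists_of_mem_edges (td : TranslationData Θ T) {e : Sym2 ℕ} (he : e ∈ T.edges) :
    ∃ u v, e = s(u, v) ∧ u ∈ T.V ∧ v ∈ T.V ∧ u ≠ v := by
  obtain ⟨u, v, rfl, h | h⟩ := (td.mem_edges_iff e).mp he
  · exact ⟨u, v, rfl, td.edgeSpec_endpoints h⟩
  · obtain ⟨hv, hu, hvu⟩ := td.edgeSpec_endpoints h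
    exact ⟨u, v, rfl, hu, hv, hvu.symm⟩

lemma card_edges_le (td : TranslationData Θ T) :
    T.edges.card ≤ ∑ M ∈ Θ.links, M.switchedPrems.length + (auxLinks Θ).card := by
  classical
  have : Nonempty MLLLink := ⟨.id 0 0⟩
  choose! link hlink using fun x (hx : ∃ L ∈ Θ.links, x ∈ L.concs) => hx
  set cover := (Θ.links.biUnion fun M =>
      (M.switchedPrems.map fun x => s(td.out (link x), td.main M)).toFinset) ∪
    (auxLinks Θ).image fun L => s(td.main L, td.aux L)
  have hcover : ∀ u v, EdgeSpec Θ td.main td.aux u v → s(u, v) ∈ cover := by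
    intro u v h
    rcases td.edgeSpec_cases h with
      ⟨K, hK, M, hM, x, hxK, hxM, rfl, rfl⟩ | ⟨L, hL, rfl, rfl⟩
    · obtain ⟨hlinkK, hxlink⟩ := hlink x ⟨K, hK, hxK⟩
      have : link x = K := Θ.concUnique _ hlinkK K hK x hxlink hxK
      exact Finset.mem_union_left _ (Finset.mem_biUnion.mpr
        ⟨M, hM, List.mem_toFinset.mpr (List.mem_map.mpr ⟨x, hxM, by rw [this]⟩)⟩)
    · exact Finset.mem_union_right _ (Finset.mem_image_of_mem _ (mem_auxLinks.mpr hL))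
  have hsub : T.edges ⊆ cover := by
    intro e he
    obtain ⟨u, v, rfl, h | h⟩ := (td.mem_edges_iff e).mp he
    · exact hcover u v h
    · exact Sym2.eq_swap ▸ hcover v u h
  refine (Finset.card_le_card hsub).trans ((Finset.card_union_le _ _).trans
    (add_le_add (Finset.card_biUnion_le.trans (Finset.sum_le_sum fun M _ => ?_))
      Finset.card_image_le))
  exact (List.toFinset_card_le _).trans (List.length_map _).le

lemma card_links_add_card_auxLinks_le (td : TranslationData Θ T) :
    Θ.links.card + (auxLinks Θ).card ≤ T.V.card := by
  classical
  have hdisj : Disjoint (Θ.links.image td.main) ((auxLinks Θ).image td.aux) := by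
    simp only [Finset.disjoint_left, Finset.mem_image, mem_auxLinks]
    rintro _ ⟨L, hL, rfl⟩ ⟨L', hL', he⟩
    exact td.main_ne_aux L hL L' hL' he.symm
  have hsub : Θ.links.image td.main ∪ (auxLinks Θ).image td.aux ⊆ T.V := by
    simp only [Finset.union_subset_iff, Finset.image_subset_iff, mem_auxLinks]
    exact ⟨fun L hL => td.main_mem hL, fun L hL => td.aux_mem hL⟩
  calc Θ.links.card + (auxLinks Θ).card
      = (Θ.links.image td.main ∪ (auxLinks Θ).image td.aux).card := by
        rw [Finset.card_union_of_disjoint hdisj,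
          Finset.card_image_of_injOn fun L1 h1 L2 h2 => td.main_injOn L1 h1 L2 h2,
          Finset.card_image_of_injOn fun L1 h1 L2 h2 => td.aux_injOn L1 L2
            (mem_auxLinks.mp h1) (mem_auxLinks.mp h2)]
    _ ≤ T.V.card := Finset.card_le_card hsub

lemma reachable_out_main (hL : L ∈ Θ.links) : T.graph.Reachable (td.out L) (td.main L) := by
  by_cases h : hasAux Θ L
  · rw [td.out_of_hasAux h]
    have hadj : T.graph.Adj (td.main L) (td.aux L) :=
      ⟨td.main_ne_aux L hL L h, td.main_aux_mem_edges h⟩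
    exact hadj.reachable.symm
  · rw [td.out_of_not_hasAux h]

lemma reachable_out_of_drStep (hK : K ∈ Θ.links) (hL : L ∈ Θ.links) (hM : M ∈ Θ.links)
    {a b : Occ} (h : drStep extremeLeft L a b) (ha : a ∈ K.concs) (hb : b ∈ M.concs) :
    T.graph.Reachable (td.out K) (td.out M) := by
  obtain ⟨hbL, haL | haL⟩ := MLLLink.mem_of_drStep_extremeLeft h
  · obtain rfl := Θ.concUnique K hK L hL a ha haL
    obtain rfl := Θ.concUnique K hK M hM b hbL hb
    rfl
  · obtain rfl := Θ.concUnique L hL M hM b hbL hb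
    have hKL := Θ.ne_of_mem_concs_of_mem_prems hK ha (L.switchedPrems_subset_prems haL)
    have hadj : T.graph.Adj (td.out K) (td.main L) :=
      ⟨td.out_ne_main hK hL hKL, td.mem_edges_of_mem_switchedPrems hK hL ha haL⟩
    exact hadj.reachable.trans (td.reachable_out_main hL).symm

lemma reachable_out_of_reachable {x y : Θ.occSet}
    (h : ((DRGraphL Θ).induce Θ.occSet).Reachable x y) (hK : K ∈ Θ.links)
    (hM : M ∈ Θ.links) (hx : ↑x ∈ K.concs) (hy : ↑y ∈ M.concs) :
    T.graph.Reachable (td.out K) (td.out M) := by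
  obtain ⟨p⟩ := h
  induction p generalizing K with
  | nil => rw [Θ.concUnique K hK M hM _ hx hy]
  | @cons _ z _ hadj _ ih =>
    obtain ⟨N, hN, hzN⟩ := Θ.exists_mem_concs z.2
    obtain ⟨-, L, hL, hs | hs⟩ := hadj
    · exact (td.reachable_out_of_drStep hK hL hN hs hx hzN).trans (ih hN hzN hy)
    · exact (td.reachable_out_of_drStep hN hL hK hs hzN hx).symm.trans (ih hN hzN hy)

lemma exists_reachable_out {v : ℕ} (hv : v ∈ T.V) :
    ∃ K ∈ Θ.links, T.graph.Reachable (td.out K) v := by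
  rcases (td.mem_V_iff v).mp hv with ⟨L, hL, rfl⟩ | ⟨L, hL, rfl⟩
  · exact ⟨L, hL, td.reachable_out_main hL⟩
  · exact ⟨L, hL.1, by rw [td.out_of_hasAux hL]⟩

lemma connected (td : TranslationData Θ T) (hdr : DRTreeL Θ) :
    (T.graph.induce (T.V : Set ℕ)).Connected := by
  obtain ⟨x₀⟩ := hdr.connected.nonempty
  obtain ⟨L₀, hL₀, hx₀⟩ := Θ.exists_mem_concs x₀.2
  have hreach : ∀ v ∈ T.V, T.graph.Reachable (td.out L₀) v := by
    intro v hv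
    obtain ⟨K, hK, hKv⟩ := td.exists_reachable_out hv
    obtain ⟨y, hyK⟩ := K.exists_mem_concs
    have hDR := hdr.connected.preconnected x₀ ⟨y, K, hK, Or.inl hyK⟩
    exact (td.reachable_out_of_reachable hDR hL₀ hK hx₀ hyK).trans hKv
  have hedge : ∀ u v, T.graph.Adj u v → u ∈ T.V := fun u v h => by
    obtain ⟨a, b, hab, ha, hb, -⟩ := td.exists_of_mem_edges h.2
    rcases Sym2.eq_iff.mp hab with ⟨rfl, -⟩ | ⟨rfl, -⟩ <;> assumption
  refine (connected_iff_exists_forall_reachable _).mpr ⟨⟨_, td.out_mem hL₀⟩, fun v => ?_⟩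
  exact (hreach v v.2).induce_of_forall_adj_mem hedge _ _

lemma isTree (td : TranslationData Θ T) (hdr : DRTreeL Θ) :
    (T.graph.induce (T.V : Set ℕ)).IsTree := by
  refine isTree_of_connected_of_natCard_edgeSet_lt (td.connected hdr) ?_
  have := natCard_edgeSet_induce_le (s := (T.V : Set ℕ)) T.graph_edgeSet_subset
  have := td.card_edges_le
  have := Θ.sum_length_switchedPrems_lt hdr
  have := td.card_links_add_card_auxLinks_le
  have : Nat.card (T.V : Set ℕ) = T.V.card := by simp
  omega

-- `c` is meant to be the conclusion of the ⅋-link `P`.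
def IsLowerNeighbour (P : MLLLink) (c : Occ) (w : ℕ) : Prop :=
  (hasAux Θ P ∧ w = td.aux P) ∨
    (¬ hasAux Θ P ∧ ∃ M ∈ Θ.links, c ∈ M.prems ∧ w = td.main M)

lemma IsLowerNeighbour.eq {P : MLLLink} {c : Occ} {w w' : ℕ}
    (hw : td.IsLowerNeighbour P c w) (hw' : td.IsLowerNeighbour P c w') : w = w' := by
  rcases hw with ⟨hA, rfl⟩ | ⟨hA, M, hM, hcM, rfl⟩ <;>
    rcases hw' with ⟨hA', rfl⟩ | ⟨hA', M', hM', hcM', rfl⟩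
  · rfl
  · exact absurd hA hA'
  · exact absurd hA' hA
  · rw [Θ.premUnique M hM M' hM' c hcM hcM']

lemma eq_upper_or_lower_of_edgeSpec {l r c : Occ} (hP : MLLLink.par l r c ∈ Θ.links)
    (hK : K ∈ Θ.links) (hlK : l ∈ K.concs) {u v : ℕ} (h : EdgeSpec Θ td.main td.aux u v)
    (hmem : td.main (.par l r c) ∈ s(u, v)) :
    s(u, v) = s(td.out K, td.main (.par l r c)) ∨
      ∃ w, td.IsLowerNeighbour (.par l r c) c w ∧ s(u, v) = s(td.main (.par l r c), w) := by
  rcases td.edgeSpec_cases h with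
    ⟨K', hK', M, hM, x, hxK', hxM, rfl, rfl⟩ | ⟨L, hL, rfl, rfl⟩
  · rcases Sym2.mem_iff.mp hmem with hPK' | hPM
    · obtain ⟨rfl, hA⟩ := td.main_eq_out hK' hP hPK'
      obtain rfl : x = c := by simpa [MLLLink.concs] using hxK'
      refine Or.inr ⟨_, Or.inr ⟨hA, M, hM, M.switchedPrems_subset_prems hxM, rfl⟩, ?_⟩
      rw [td.out_of_not_hasAux hA]
    · obtain rfl := td.main_injOn _ hP M hM hPM
      obtain rfl : x = l := by simpa [MLLLink.switchedPrems] using hxM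
      rw [Θ.concUnique K' hK' K hK x hxK' hlK]
      exact Or.inl rfl
  · rcases Sym2.mem_iff.mp hmem with hPL | hPL
    · obtain rfl := td.main_injOn _ hP L hL.1 hPL
      exact Or.inr ⟨_, Or.inl ⟨hL, rfl⟩, rfl⟩
    · exact absurd hPL (td.main_ne_aux _ hP L hL)

lemma par_node_spec (td : TranslationData Θ T) {v : ℕ} (hv : v ∈ T.V)
    (hk : T.kind v = DNodeKind.par L) :
    (∃ u ∈ T.V, T.upper v = some u ∧ s(v, u) ∈ T.edges) ∧
      1 ≤ T.degree v ∧ T.degree v ≤ 2 := by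
  classical
  obtain ⟨hP, rfl, l, r, c, rfl⟩ := td.eq_main_of_kind_eq_par hv hk
  obtain ⟨K, hK, -, hlK⟩ := Θ.premIsConc _ hP l (by simp [MLLLink.prems])
  set eUp := s(td.out K, td.main (.par l r c))
  have hup : eUp ∈ T.edges :=
    td.mem_edges_of_mem_switchedPrems hK hP hlK (by simp [MLLLink.switchedPrems])
  set F := T.edges.filter (td.main (.par l r c) ∈ ·)
  have hlower : ∀ e ∈ F.erase eUp,
      ∃ w, td.IsLowerNeighbour (.par l r c) c w ∧ e = s(td.main (.par l r c), w) := by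
    intro e he
    obtain ⟨hne, he⟩ := Finset.mem_erase.mp he
    obtain ⟨he, hmem⟩ := Finset.mem_filter.mp he
    obtain ⟨u, v, rfl, h | h⟩ := (td.mem_edges_iff e).mp he
    · exact (td.eq_upper_or_lower_of_edgeSpec hP hK hlK h hmem).resolve_left hne
    · rw [Sym2.eq_swap] at hne hmem ⊢
      exact (td.eq_upper_or_lower_of_edgeSpec hP hK hlK h hmem).resolve_left hne
  have hcard : (F.erase eUp).card ≤ 1 := by
    refine Finset.card_le_one.mpr fun e he e' he' => ?_
    obtain ⟨w, hw, rfl⟩ := hlower e he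
    obtain ⟨w', hw', rfl⟩ := hlower e' he'
    rw [IsLowerNeighbour.eq td hw hw']
  have hupF : eUp ∈ F := Finset.mem_filter.mpr ⟨hup, Sym2.mem_mk_right _ _⟩
  refine ⟨⟨td.out K, td.out_mem hK, td.upper_main_par l r c hP K hK hlK _ (td.outIs_out K),
    Sym2.eq_swap ▸ hup⟩, Finset.card_pos.mpr ⟨eUp, hupF⟩, ?_⟩
  have := Finset.pred_card_le_card_erase (s := F) (a := eUp)
  show F.card ≤ 2
  omega

end TranslationData

theorem translation_is_deNM_tree_general (Θ : ProofStructure)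
    (T : PreTree) (hT : IsTranslation Θ T) :
    T.IsDeNMTree := by
  obtain ⟨td⟩ := hT.nonempty_translationData
  refine ⟨fun e he x hx => ?_, fun e he => ?_, td.isTree hT.1.1,
    fun v hv L hk => td.par_node_spec hv hk⟩
  · obtain ⟨u, v, rfl, hu, hv, -⟩ := td.exists_of_mem_edges he
    rcases Sym2.mem_iff.mp hx with rfl | rfl <;> assumption
  · obtain ⟨u, v, rfl, -, -, huv⟩ := td.exists_of_mem_edges he
    exact Sym2.mk_isDiag_iff.not.mpr huv

/-- Let Θ be an MLL proof structure such that S_∀ℓ(Θ) is a tree and the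
translation T(Θ) is defined.  Then T(Θ) is a deNM-tree; in particular the graph produced
by the translation is a finite tree. -/
theorem translation_is_deNM_tree (Θ : ProofStructure) (hdef : TransDefined Θ)
    (T : PreTree) (hT : IsTranslation Θ T) :
    T.IsDeNMTree :=
  translation_is_deNM_tree_general Θ T hT
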